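/- (Conditional dominance of the n-step backup.) In the n-step MDP setting with a sub-σ-algebra 𝒢 ⊆ 𝓕, for every n ∈ ℕ, every state s and action a, the conditional static value is dominated by the conditional expectation of the random n-step value: φ_n^𝒢(s,a) ≤ E[Υ_n(s,a) | 𝒢] almost surely. -/

import Mathlib

open MeasureTheory

/-- Pointwise `n`-step backup of the random frontier values `Z`:
`Υ_0(s,a) = Z(s,a)` and
`Υ_{n+1}(s,a) = Σ_{s'} P(s,a,s')·(R(s,a,s') + γ·max_{a' ∈ A_{s'}} Υ_n(s',a'))`. -/
noncomputable def Upsilon {Ω S A : Type*} [Fintype S] (As : S → Finset A)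
    (hAs : ∀ s, (As s).Nonempty) (P R : S → A → S → ℝ) (γ : ℝ)
    (Z : S → A → Ω → ℝ) : ℕ → S → A → Ω → ℝ
  | 0 => fun s a ω => Z s a ω
  | n + 1 => fun s a ω => ∑ s' : S, P s a s' *
      (R s a s' + γ * (As s').sup' (hAs s') fun a' => Upsilon As hAs P R γ Z n s' a' ω)

/-- Deterministic `n`-step backup of a base value function: used for the static value `φ_n`
(base `(s,a) ↦ E[Z(s,a)]`) and, pointwise in `ω`, for the conditional static value `φ_n^𝒢`
(base `(s,a) ↦ E[Z(s,a)|𝒢](ω)`). -/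
noncomputable def stepValue {S A : Type*} [Fintype S] (As : S → Finset A)
    (hAs : ∀ s, (As s).Nonempty) (P R : S → A → S → ℝ) (γ : ℝ)
    (base : S → A → ℝ) : ℕ → S → A → ℝ
  | 0 => base
  | n + 1 => fun s a => ∑ s' : S, P s a s' *
      (R s a s' + γ * (As s').sup' (hAs s') fun a' => stepValue As hAs P R γ base n s' a')


/-!
Induction on `n`. Conditional expectation is linear, so it commutes with the affine part of the
backup, and for the maximum it satisfies Jensen's inequality `max E[Xᵢ|𝒢] ≤ E[max Xᵢ|𝒢]`.
Since `P ≥ 0` and `γ ≥ 0` the backup is monotone in the inner values, which carries the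
inductive hypothesis through one more step.
-/

section CondExp

variable {Ω ι : Type*} {mΩ : MeasurableSpace Ω} {μ : Measure Ω} {m : MeasurableSpace Ω}

theorem Integrable.finset_sup' (t : Finset ι) (ht : t.Nonempty) {f : ι → Ω → ℝ}
    (hf : ∀ i ∈ t, Integrable (f i) μ) :
    Integrable (fun ω => t.sup' ht fun i => f i ω) μ := by
  simp_rw [← Finset.sup'_apply]
  exact Finset.sup'_induction (p := fun g => Integrable g μ) ht f
    (fun _ h₁ _ h₂ => h₁.sup h₂) hf

theorem ae_sup'_condExp_le_condExp_sup' (t : Finset ι) (ht : t.Nonempty) {f : ι → Ω → ℝ}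
    (hf : ∀ i ∈ t, Integrable (f i) μ) :
    ∀ᵐ ω ∂μ, (t.sup' ht fun i => μ[f i|m] ω) ≤ μ[fun ω => t.sup' ht fun i => f i ω|m] ω := by
  have hle : ∀ i ∈ t, μ[f i|m] ≤ᵐ[μ] μ[fun ω => t.sup' ht fun i => f i ω|m] := fun i hi =>
    condExp_mono (hf i hi) (Integrable.finset_sup' t ht hf)
      (ae_of_all _ fun ω => Finset.le_sup' (fun i => f i ω) hi)
  filter_upwards [(Filter.eventually_all_finset t).2 hle] with ω hω
  exact Finset.sup'_le ht _ hω

theorem condExp_const_mul_const_add_mul [IsFiniteMeasure μ] (hm : m ≤ mΩ) (c r γ : ℝ)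
    {g : Ω → ℝ} (hg : Integrable g μ) :
    μ[fun ω => c * (r + γ * g ω)|m] =ᵐ[μ] fun ω => c * (r + γ * μ[g|m] ω) := by
  have hsplit : (fun ω => c * (r + γ * g ω)) = (fun _ => c * r) + (c * γ) • g := by
    ext ω; simp only [Pi.add_apply, Pi.smul_apply, smul_eq_mul]; ring
  rw [hsplit]
  filter_upwards [condExp_add (integrable_const (c * r)) (hg.smul (c * γ)) m,
    condExp_smul (c * γ) g m] with ω hadd hsmul
  rw [hadd, Pi.add_apply, hsmul, condExp_const hm]
  simp only [Pi.smul_apply, smul_eq_mul]; ring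

theorem condExp_sum_const_mul_const_add_mul [IsFiniteMeasure μ] [Fintype ι] (hm : m ≤ mΩ)
    (c r : ι → ℝ) (γ : ℝ) {g : ι → Ω → ℝ} (hg : ∀ i, Integrable (g i) μ) :
    μ[fun ω => ∑ i, c i * (r i + γ * g i ω)|m] =ᵐ[μ]
      fun ω => ∑ i, c i * (r i + γ * μ[g i|m] ω) := by
  have hsum := condExp_finsetSum (μ := μ) (s := Finset.univ)
    (f := fun i ω => c i * (r i + γ * g i ω))
    (fun i _ => ((integrable_const _).add ((hg i).const_mul γ)).const_mul (c i)) m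
  have hterm := ae_all_iff.2 fun i => condExp_const_mul_const_add_mul hm (c i) (r i) γ (hg i)
  simp only [Finset.sum_fn] at hsum
  filter_upwards [hsum, hterm] with ω hsum hterm
  rw [hsum]
  exact Finset.sum_congr rfl fun i _ => hterm i

end CondExp

theorem integrable_upsilon {Ω S A : Type*} {mΩ : MeasurableSpace Ω} {μ : Measure Ω}
    [IsFiniteMeasure μ] [Fintype S] (As : S → Finset A) (hAs : ∀ s, (As s).Nonempty)
    (P R : S → A → S → ℝ) (γ : ℝ) {Z : S → A → Ω → ℝ} (hZ : ∀ s a, Integrable (Z s a) μ)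
    (n : ℕ) (s : S) (a : A) :
    Integrable (Upsilon As hAs P R γ Z n s a) μ := by
  induction n generalizing s a with
  | zero => exact hZ s a
  | succ n ih =>
    exact integrable_finsetSum _ fun s' _ => ((integrable_const _).add
      ((Integrable.finset_sup' _ _ fun a' _ => ih s' a').const_mul γ)).const_mul _

theorem voc_stmt13_general {Ω S A : Type*} {mΩ : MeasurableSpace Ω} (μ : Measure Ω)
    [IsProbabilityMeasure μ] [Fintype S]
    (As : S → Finset A) (hAs : ∀ s, (As s).Nonempty) (P R : S → A → S → ℝ)
    (hP : ∀ s a s', 0 ≤ P s a s')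
    (γ : ℝ) (hγ : 0 ≤ γ) (Z : S → A → Ω → ℝ) (hZ : ∀ s a, Integrable (Z s a) μ)
    (m : MeasurableSpace Ω) (hm : m ≤ mΩ) :
    ∀ (n : ℕ) (s : S) (a : A),
      ∀ᵐ ω ∂μ,
        stepValue As hAs P R γ (fun s' a' => (μ[Z s' a'|m]) ω) n s a ≤
          (μ[Upsilon As hAs P R γ Z n s a|m]) ω := by
  intro n
  induction n with
  | zero => exact fun s a => ae_of_all _ fun _ => le_rfl
  | succ n ih =>
    intro s a
    have hU := integrable_upsilon As hAs P R γ hZ n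
    have hmax : ∀ᵐ ω ∂μ, ∀ s',
        ((As s').sup' (hAs s') fun a' =>
          stepValue As hAs P R γ (fun s' a' => (μ[Z s' a'|m]) ω) n s' a') ≤
        μ[fun ω => (As s').sup' (hAs s') fun a' => Upsilon As hAs P R γ Z n s' a' ω|m] ω := by
      refine ae_all_iff.2 fun s' => ?_
      filter_upwards [(Filter.eventually_all_finset (As s')).2 fun a' _ => ih s' a',
        ae_sup'_condExp_le_condExp_sup' (As s') (hAs s') fun a' _ => hU s' a'] with ω hih hjensen
      exact (Finset.sup'_mono_fun hih).trans hjensen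
    filter_upwards [hmax, condExp_sum_const_mul_const_add_mul hm (P s a) (R s a) γ
      fun s' => Integrable.finset_sup' (As s') (hAs s') fun a' _ => hU s' a'] with ω hmax hbackup
    refine le_of_le_of_eq ?_ hbackup.symm
    exact Finset.sum_le_sum fun s' _ =>
      mul_le_mul_of_nonneg_left (add_le_add_right (mul_le_mul_of_nonneg_left (hmax s') hγ) _)
        (hP s a s')

/-- Conditional dominance of the `n`-step backup: for a sub-σ-algebra `𝒢 ⊆ 𝓕`,
for every `n`, `s`, `a`, the conditional static value satisfies
`φ_n^𝒢(s,a) ≤ E[Υ_n(s,a) | 𝒢]` almost surely. -/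
theorem voc_stmt13 {Ω S A : Type*} {mΩ : MeasurableSpace Ω} (μ : Measure Ω)
    [IsProbabilityMeasure μ] [Fintype S] [Nonempty S] [Fintype A] [Nonempty A]
    (As : S → Finset A) (hAs : ∀ s, (As s).Nonempty) (P R : S → A → S → ℝ)
    (hP : ∀ s a s', 0 ≤ P s a s') (hPsum : ∀ s a, ∑ s', P s a s' = 1)
    (γ : ℝ) (hγ : 0 ≤ γ) (Z : S → A → Ω → ℝ) (hZ : ∀ s a, Integrable (Z s a) μ)
    (m : MeasurableSpace Ω) (hm : m ≤ mΩ) :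
    ∀ (n : ℕ) (s : S) (a : A),
      ∀ᵐ ω ∂μ,
        stepValue As hAs P R γ (fun s' a' => (μ[Z s' a'|m]) ω) n s a ≤
          (μ[Upsilon As hAs P R γ Z n s a|m]) ω :=
  voc_stmt13_general μ As hAs P R hP γ hγ Z hZ m hm
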